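/- arXiv:1407.2362 — 5 statements merged into one kernel-verified Lean document; each statement's English description precedes it below -/
import Mathlib

section
/- Let P : Fin n → Fin n → Fin n → ℝ satisfy the Harnack P-symmetries. Then for all indices i, j ∈ Fin n: 2·∑_{m,n} P i m n · P j m n − 2·∑_{m,n} P i m n · P j n m = ∑_{m,n} P m n i · P m n j. -/
/-- For a tensor `P` with the Harnack `P`-symmetries,
`2 ∑ P_{imp} P_{jmp} - 2 ∑ P_{imp} P_{jpm} = ∑ P_{mpi} P_{mpj}`. -/
theorem P_contraction_identity {n : ℕ}
    (P : Fin n → Fin n → Fin n → ℝ)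
    (hP1 : ∀ i j k, P i j k = -P j i k)
    (hP2 : ∀ i j k, P i j k + P j k i + P k i j = 0) :
    ∀ i j : Fin n,
      2 * (∑ m, ∑ p, P i m p * P j m p)
        - 2 * (∑ m, ∑ p, P i m p * P j p m)
      = ∑ m, ∑ p, P m p i * P m p j := by
  intro i j
  have key : ∀ m p : Fin n, P m p i * P m p j =
      (P i m p * P j m p + P i p m * P j p m)
        - (P i m p * P j p m + P i p m * P j m p) := by
    intro m p
    have e1 : P m p i = P i p m - P i m p := by
      have := hP2 m p i
      have := hP1 p i m
      linarith
    have e2 : P m p j = P j p m - P j m p := by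
      have := hP2 m p j
      have := hP1 p j m
      linarith
    rw [e1, e2]; ring
  have hr : (∑ m, ∑ p, P m p i * P m p j) =
      (∑ m, ∑ p, (P i m p * P j m p + P i p m * P j p m))
        - (∑ m, ∑ p, (P i m p * P j p m + P i p m * P j m p)) := by
    rw [← Finset.sum_sub_distrib]
    refine Finset.sum_congr rfl fun m _ => ?_
    rw [← Finset.sum_sub_distrib]
    exact Finset.sum_congr rfl fun p _ => key m p
  rw [hr]
  have s1 : (∑ m, ∑ p, (P i m p * P j m p + P i p m * P j p m))
      = 2 * (∑ m, ∑ p, P i m p * P j m p) := by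
    simp only [Finset.sum_add_distrib]
    rw [Finset.sum_comm (f := fun m p => P i p m * P j p m)]
    ring
  have s2 : (∑ m, ∑ p, (P i m p * P j p m + P i p m * P j m p))
      = 2 * (∑ m, ∑ p, P i m p * P j p m) := by
    simp only [Finset.sum_add_distrib]
    rw [Finset.sum_comm (f := fun m p => P i p m * P j m p)]
    ring
  rw [s1, s2]
end

section
/- Let R be an algebraic curvature tensor on ℝ^n and let U : Fin n → Fin n → ℝ be antisymmetric. Then ∑_{i,j,k,l,m,n} (2·R i m j n · R k m l n − 2·R i m j n · R l m k n + 2·R i m k n · R j m l n − 2·R i m l n · R j m k n) · U i j · U k l = ∑_{i,j,k,l,m,n} (R i j m n · R k l m n + 4·R i m k n · R j m l n) · U i j · U k l. -/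
private def S6 {n : ℕ} (f : Fin n → Fin n → Fin n → Fin n → Fin n → Fin n → ℝ) : ℝ :=
  ∑ i, ∑ j, ∑ k, ∑ l, ∑ m, ∑ p, f i j k l m p

private lemma S6_congr {n : ℕ} {f g : Fin n → Fin n → Fin n → Fin n → Fin n → Fin n → ℝ}
    (h : ∀ i j k l m p, f i j k l m p = g i j k l m p) : S6 f = S6 g := by
  unfold S6
  exact Finset.sum_congr rfl fun i _ => Finset.sum_congr rfl fun j _ =>
    Finset.sum_congr rfl fun k _ => Finset.sum_congr rfl fun l _ =>
    Finset.sum_congr rfl fun m _ => Finset.sum_congr rfl fun p _ => h i j k l m p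

private lemma S6_swap_ij {n : ℕ} (f : Fin n → Fin n → Fin n → Fin n → Fin n → Fin n → ℝ) :
    S6 f = S6 (fun i j k l m p => f j i k l m p) := by
  unfold S6; exact Finset.sum_comm

private lemma S6_swap_kl {n : ℕ} (f : Fin n → Fin n → Fin n → Fin n → Fin n → Fin n → ℝ) :
    S6 f = S6 (fun i j k l m p => f i j l k m p) := by
  unfold S6
  refine Finset.sum_congr rfl fun i _ => Finset.sum_congr rfl fun j _ => ?_
  exact Finset.sum_comm

private lemma S6_neg {n : ℕ} (f : Fin n → Fin n → Fin n → Fin n → Fin n → Fin n → ℝ) :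
    S6 (fun i j k l m p => -f i j k l m p) = -S6 f := by
  simp [S6]

set_option maxHeartbeats 1600000 in
/-- For an algebraic curvature tensor `R` and an antisymmetric 2-form `U`,
the quadratic curvature terms of the evolution equation contracted with
`U ⊗ U` can be rewritten as `(R_{ijmp} R_{klmp} + 4 R_{imkp} R_{jmlp}) U^{ij} U^{kl}`. -/
theorem curvature_quadratic_contraction {n : ℕ}
    (R : Fin n → Fin n → Fin n → Fin n → ℝ)
    (hR1 : ∀ i j k l, R i j k l = -R j i k l)
    (hR2 : ∀ i j k l, R i j k l = -R i j l k)
    (hR3 : ∀ i j k l, R i j k l = R k l i j)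
    (hBianchi : ∀ i j k l, R i j k l + R j k i l + R k i j l = 0)
    (U : Fin n → Fin n → ℝ) (hU : ∀ i j, U i j = -U j i) :
    ∑ i, ∑ j, ∑ k, ∑ l, ∑ m, ∑ p,
        (2 * (R i m j p * R k m l p) - 2 * (R i m j p * R l m k p)
          + 2 * (R i m k p * R j m l p) - 2 * (R i m l p * R j m k p))
        * U i j * U k l
      = ∑ i, ∑ j, ∑ k, ∑ l, ∑ m, ∑ p,
          (R i j m p * R k l m p + 4 * (R i m k p * R j m l p)) * U i j * U k l := by
  show S6 (fun i j k l m p =>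
      (2 * (R i m j p * R k m l p) - 2 * (R i m j p * R l m k p)
        + 2 * (R i m k p * R j m l p) - 2 * (R i m l p * R j m k p)) * U i j * U k l)
    = S6 (fun i j k l m p =>
      (R i j m p * R k l m p + 4 * (R i m k p * R j m l p)) * U i j * U k l)
  -- B = -A
  have hb : S6 (fun i j k l m p => R i m j p * R l m k p * U i j * U k l)
      = - S6 (fun i j k l m p => R i m j p * R k m l p * U i j * U k l) := by
    rw [S6_swap_kl, ← S6_neg]
    refine S6_congr fun i j k l m p => ?_
    show R i m j p * R k m l p * U i j * U l k
        = -(R i m j p * R k m l p * U i j * U k l)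
    rw [hU l k]; ring
  -- D = -C
  have hd : S6 (fun i j k l m p => R i m l p * R j m k p * U i j * U k l)
      = - S6 (fun i j k l m p => R i m k p * R j m l p * U i j * U k l) := by
    rw [S6_swap_kl, ← S6_neg]
    refine S6_congr fun i j k l m p => ?_
    show R i m k p * R j m l p * U i j * U l k
        = -(R i m k p * R j m l p * U i j * U k l)
    rw [hU l k]; ring
  -- E2 = -B
  have he2 : S6 (fun i j k l m p => R i m j p * R m l k p * U i j * U k l)
      = - S6 (fun i j k l m p => R i m j p * R l m k p * U i j * U k l) := by
    rw [← S6_neg]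
    refine S6_congr fun i j k l m p => ?_
    show R i m j p * R m l k p * U i j * U k l
        = -(R i m j p * R l m k p * U i j * U k l)
    rw [hR1 m l k p]; ring
  -- E3 = A
  have he3 : S6 (fun i j k l m p => R m j i p * R k m l p * U i j * U k l)
      = S6 (fun i j k l m p => R i m j p * R k m l p * U i j * U k l) := by
    rw [S6_swap_ij]
    refine S6_congr fun i j k l m p => ?_
    show R m i j p * R k m l p * U j i * U k l
        = R i m j p * R k m l p * U i j * U k l
    rw [hR1 m i j p, hU j i]; ring
  -- E4 = -B
  have he4 : S6 (fun i j k l m p => R m j i p * R m l k p * U i j * U k l)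
      = - S6 (fun i j k l m p => R i m j p * R l m k p * U i j * U k l) := by
    rw [S6_swap_ij, ← S6_neg]
    refine S6_congr fun i j k l m p => ?_
    show R m i j p * R m l k p * U j i * U k l
        = -(R i m j p * R l m k p * U i j * U k l)
    rw [hR1 m i j p, hR1 m l k p, hU j i]; ring
  -- first Bianchi in the convenient form
  have hBi : ∀ a b c d, R a b c d = R a c b d + R c b a d := by
    intro a b c d
    linear_combination hBianchi a b c d - hR1 b c a d - hR1 c a b d
  -- E = 4A
  have he : S6 (fun i j k l m p => R i j m p * R k l m p * U i j * U k l)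
      = S6 (fun i j k l m p => R i m j p * R k m l p * U i j * U k l)
      + S6 (fun i j k l m p => R i m j p * R k m l p * U i j * U k l)
      + S6 (fun i j k l m p => R i m j p * R k m l p * U i j * U k l)
      + S6 (fun i j k l m p => R i m j p * R k m l p * U i j * U k l) := by
    have step1 : S6 (fun i j k l m p => R i j m p * R k l m p * U i j * U k l)
        = S6 (fun i j k l m p =>
              R i m j p * R k m l p * U i j * U k l
            + R i m j p * R m l k p * U i j * U k l
            + R m j i p * R k m l p * U i j * U k l
            + R m j i p * R m l k p * U i j * U k l) := by
      refine S6_congr fun i j k l m p => ?_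
      show R i j m p * R k l m p * U i j * U k l = _
      rw [hBi i j m p, hBi k l m p]; ring
    have split : S6 (fun i j k l m p =>
              R i m j p * R k m l p * U i j * U k l
            + R i m j p * R m l k p * U i j * U k l
            + R m j i p * R k m l p * U i j * U k l
            + R m j i p * R m l k p * U i j * U k l)
        = S6 (fun i j k l m p => R i m j p * R k m l p * U i j * U k l)
        + S6 (fun i j k l m p => R i m j p * R m l k p * U i j * U k l)
        + S6 (fun i j k l m p => R m j i p * R k m l p * U i j * U k l)
        + S6 (fun i j k l m p => R m j i p * R m l k p * U i j * U k l) := by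
      simp only [S6, Finset.sum_add_distrib]
    rw [step1, split, he2, he3, he4, hb]
    ring
  -- split the left-hand side into eight unscaled sums
  have hLc : S6 (fun i j k l m p =>
      (2 * (R i m j p * R k m l p) - 2 * (R i m j p * R l m k p)
        + 2 * (R i m k p * R j m l p) - 2 * (R i m l p * R j m k p)) * U i j * U k l)
      = S6 (fun i j k l m p =>
          R i m j p * R k m l p * U i j * U k l
        + R i m j p * R k m l p * U i j * U k l
        - R i m j p * R l m k p * U i j * U k l
        - R i m j p * R l m k p * U i j * U k l
        + R i m k p * R j m l p * U i j * U k l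
        + R i m k p * R j m l p * U i j * U k l
        - R i m l p * R j m k p * U i j * U k l
        - R i m l p * R j m k p * U i j * U k l) :=
    S6_congr fun i j k l m p => by ring
  have hLsplit : S6 (fun i j k l m p =>
          R i m j p * R k m l p * U i j * U k l
        + R i m j p * R k m l p * U i j * U k l
        - R i m j p * R l m k p * U i j * U k l
        - R i m j p * R l m k p * U i j * U k l
        + R i m k p * R j m l p * U i j * U k l
        + R i m k p * R j m l p * U i j * U k l
        - R i m l p * R j m k p * U i j * U k l
        - R i m l p * R j m k p * U i j * U k l)
      = S6 (fun i j k l m p => R i m j p * R k m l p * U i j * U k l)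
      + S6 (fun i j k l m p => R i m j p * R k m l p * U i j * U k l)
      - S6 (fun i j k l m p => R i m j p * R l m k p * U i j * U k l)
      - S6 (fun i j k l m p => R i m j p * R l m k p * U i j * U k l)
      + S6 (fun i j k l m p => R i m k p * R j m l p * U i j * U k l)
      + S6 (fun i j k l m p => R i m k p * R j m l p * U i j * U k l)
      - S6 (fun i j k l m p => R i m l p * R j m k p * U i j * U k l)
      - S6 (fun i j k l m p => R i m l p * R j m k p * U i j * U k l) := by
    simp only [S6, Finset.sum_add_distrib, Finset.sum_sub_distrib]
  -- split the right-hand side into five unscaled sums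
  have hRc : S6 (fun i j k l m p =>
      (R i j m p * R k l m p + 4 * (R i m k p * R j m l p)) * U i j * U k l)
      = S6 (fun i j k l m p =>
          R i j m p * R k l m p * U i j * U k l
        + R i m k p * R j m l p * U i j * U k l
        + R i m k p * R j m l p * U i j * U k l
        + R i m k p * R j m l p * U i j * U k l
        + R i m k p * R j m l p * U i j * U k l) :=
    S6_congr fun i j k l m p => by ring
  have hRsplit : S6 (fun i j k l m p =>
          R i j m p * R k l m p * U i j * U k l
        + R i m k p * R j m l p * U i j * U k l
        + R i m k p * R j m l p * U i j * U k l
        + R i m k p * R j m l p * U i j * U k l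
        + R i m k p * R j m l p * U i j * U k l)
      = S6 (fun i j k l m p => R i j m p * R k l m p * U i j * U k l)
      + S6 (fun i j k l m p => R i m k p * R j m l p * U i j * U k l)
      + S6 (fun i j k l m p => R i m k p * R j m l p * U i j * U k l)
      + S6 (fun i j k l m p => R i m k p * R j m l p * U i j * U k l)
      + S6 (fun i j k l m p => R i m k p * R j m l p * U i j * U k l) := by
    simp only [S6, Finset.sum_add_distrib]
  rw [hLc, hLsplit, hRc, hRsplit, hb, hd, he]
  ring
end

section
/- Let R be an algebraic curvature tensor on ℝ^n, let P : Fin n → Fin n → Fin n → ℝ be arbitrary, let U : Fin n → Fin n → ℝ be antisymmetric, and let W : Fin n → ℝ. Then ∑_{i,j,k,l,m,n} R i j m n · R k l m n · U i j · U k l + 4·∑_{i,j,k,m,n} R i m j n · P m n k · U i j · W k + ∑_{i,j,m,n} P m n i · P m n j · W i · W j = ∑_{i,j} ( ∑_m P i j m · W m + ∑_{m,n} R i j m n · U m n )². In particular, the left-hand side is nonnegative. -/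
/-- The Harnack-type combination
`R_{ijmp} R_{klmp} U^{ij} U^{kl} + 4 R_{imjp} P_{mpk} U^{ij} W^k + P_{mpi} P_{mpj} W^i W^j`
is the sum of squares `∑_{i,j} (P_{ijm} W^m + R_{ijmp} U^{mp})²`; in particular it is
nonnegative. -/
theorem harnack_sum_of_squares {n : ℕ}
    (R : Fin n → Fin n → Fin n → Fin n → ℝ)
    (hR1 : ∀ i j k l, R i j k l = -R j i k l)
    (hR2 : ∀ i j k l, R i j k l = -R i j l k)
    (hR3 : ∀ i j k l, R i j k l = R k l i j)
    (hBianchi : ∀ i j k l, R i j k l + R j k i l + R k i j l = 0)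
    (P : Fin n → Fin n → Fin n → ℝ)
    (U : Fin n → Fin n → ℝ) (hU : ∀ i j, U i j = -U j i)
    (W : Fin n → ℝ) :
    ((∑ i, ∑ j, ∑ k, ∑ l, ∑ m, ∑ p, R i j m p * R k l m p * U i j * U k l)
        + 4 * (∑ i, ∑ j, ∑ k, ∑ m, ∑ p, R i m j p * P m p k * U i j * W k)
        + (∑ i, ∑ j, ∑ m, ∑ p, P m p i * P m p j * W i * W j)
      = ∑ i, ∑ j,
          ((∑ m, P i j m * W m) + ∑ m, ∑ p, R i j m p * U m p) ^ 2)
    ∧ 0 ≤ (∑ i, ∑ j, ∑ k, ∑ l, ∑ m, ∑ p, R i j m p * R k l m p * U i j * U k l)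
        + 4 * (∑ i, ∑ j, ∑ k, ∑ m, ∑ p, R i m j p * P m p k * U i j * W k)
        + (∑ i, ∑ j, ∑ m, ∑ p, P m p i * P m p j * W i * W j) := by
  -- The key contraction identity from the first Bianchi identity:
  -- `∑_{q,r} R m p q r U q r = 2 ∑_{i,j} R i m j p U i j`.
  have key : ∀ m p : Fin n,
      (∑ q, ∑ r, R m p q r * U q r) = 2 * ∑ i, ∑ j, R i m j p * U i j := by
    intro m p
    have t1 : (∑ q, ∑ r, R q m p r * U q r) = ∑ q, ∑ r, R p q m r * U q r := by
      rw [Finset.sum_comm]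
      refine Finset.sum_congr rfl fun x _ => Finset.sum_congr rfl fun y _ => ?_
      rw [hR3 y m p x, hR2 p x y m, hU y x]; ring
    have t2 : (∑ q, ∑ r, R p q m r * U q r) = -∑ i, ∑ j, R i m j p * U i j := by
      rw [Finset.sum_comm]
      calc ∑ x, ∑ y, R p y m x * U y x
          = ∑ x, ∑ y, -(R x m y p * U x y) := by
            refine Finset.sum_congr rfl fun x _ => Finset.sum_congr rfl fun y _ => ?_
            rw [hR3 p y m x, hR1 m x p y, hR2 x m p y, hU y x]; ring
        _ = -∑ x, ∑ y, R x m y p * U x y := by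
            simp only [Finset.sum_neg_distrib]
    calc (∑ q, ∑ r, R m p q r * U q r)
        = ∑ q, ∑ r, (-(R p q m r * U q r) - R q m p r * U q r) := by
          refine Finset.sum_congr rfl fun q _ => Finset.sum_congr rfl fun r _ => ?_
          linear_combination (U q r) * hBianchi m p q r
      _ = (-(∑ q, ∑ r, R p q m r * U q r)) - ∑ q, ∑ r, R q m p r * U q r := by
          simp only [Finset.sum_sub_distrib, Finset.sum_neg_distrib]
      _ = 2 * ∑ i, ∑ j, R i m j p * U i j := by rw [t1, t2]; ring
  -- First term is `∑ B²`.
  have E1 : (∑ i, ∑ j, ∑ k, ∑ l, ∑ m, ∑ p, R i j m p * R k l m p * U i j * U k l)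
      = ∑ i, ∑ j, (∑ m, ∑ p, R i j m p * U m p) ^ 2 := by
    conv_lhs => enter [2, i, 2, j, 2, k]; rw [Finset.sum_comm]
    conv_lhs => enter [2, i, 2, j]; rw [Finset.sum_comm]
    conv_lhs => enter [2, i]; rw [Finset.sum_comm]
    conv_lhs => rw [Finset.sum_comm]
    conv_lhs => enter [2, m, 2, i, 2, j, 2, k]; rw [Finset.sum_comm]
    conv_lhs => enter [2, m, 2, i, 2, j]; rw [Finset.sum_comm]
    conv_lhs => enter [2, m, 2, i]; rw [Finset.sum_comm]
    conv_lhs => enter [2, m]; rw [Finset.sum_comm]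
    refine Finset.sum_congr rfl fun m _ => Finset.sum_congr rfl fun p _ => ?_
    rw [sq]
    simp only [Finset.sum_mul, Finset.mul_sum]
    refine Finset.sum_congr rfl fun i _ => Finset.sum_congr rfl fun j _ =>
      Finset.sum_congr rfl fun k _ => Finset.sum_congr rfl fun l _ => ?_
    rw [hR3 m p i j, hR3 m p k l]; ring
  -- Middle term is `2 ∑ A·B`.
  have E2 : 4 * (∑ i, ∑ j, ∑ k, ∑ m, ∑ p, R i m j p * P m p k * U i j * W k)
      = 2 * ∑ i, ∑ j, (∑ m, P i j m * W m) * (∑ m, ∑ p, R i j m p * U m p) := by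
    have inner2 : ∀ m p : Fin n,
        (∑ x, P m p x * W x) * (∑ a, ∑ b, R m p a b * U a b)
          = 2 * ∑ i, ∑ j, ∑ k, R i m j p * P m p k * U i j * W k := by
      intro m p
      rw [key m p]
      have h : (∑ x, P m p x * W x) * (∑ i, ∑ j, R i m j p * U i j)
          = ∑ i, ∑ j, ∑ k, R i m j p * P m p k * U i j * W k := by
        simp only [Finset.sum_mul, Finset.mul_sum]
        refine Finset.sum_congr rfl fun i _ => Finset.sum_congr rfl fun j _ =>
          Finset.sum_congr rfl fun k _ => ?_
        ring
      calc (∑ x, P m p x * W x) * (2 * ∑ i, ∑ j, R i m j p * U i j)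
          = 2 * ((∑ x, P m p x * W x) * (∑ i, ∑ j, R i m j p * U i j)) := by ring
        _ = 2 * ∑ i, ∑ j, ∑ k, R i m j p * P m p k * U i j * W k := by rw [h]
    have reord : (∑ i, ∑ j, ∑ k, ∑ m, ∑ p, R i m j p * P m p k * U i j * W k)
        = ∑ m, ∑ p, ∑ i, ∑ j, ∑ k, R i m j p * P m p k * U i j * W k := by
      conv_lhs => enter [2, i, 2, j]; rw [Finset.sum_comm]
      conv_lhs => enter [2, i]; rw [Finset.sum_comm]
      conv_lhs => rw [Finset.sum_comm]
      conv_lhs => enter [2, m, 2, i, 2, j]; rw [Finset.sum_comm]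
      conv_lhs => enter [2, m, 2, i]; rw [Finset.sum_comm]
      conv_lhs => enter [2, m]; rw [Finset.sum_comm]
    rw [reord]
    conv_rhs => enter [2, 2, i, 2, j]; rw [inner2 i j]
    simp only [← Finset.mul_sum]
    ring
  -- Last term is `∑ A²`.
  have E3 : (∑ i, ∑ j, ∑ m, ∑ p, P m p i * P m p j * W i * W j)
      = ∑ i, ∑ j, (∑ m, P i j m * W m) ^ 2 := by
    conv_lhs => enter [2, i]; rw [Finset.sum_comm]
    conv_lhs => rw [Finset.sum_comm]
    conv_lhs => enter [2, m, 2, i]; rw [Finset.sum_comm]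
    conv_lhs => enter [2, m]; rw [Finset.sum_comm]
    refine Finset.sum_congr rfl fun m _ => Finset.sum_congr rfl fun p _ => ?_
    rw [sq]
    simp only [Finset.sum_mul, Finset.mul_sum]
    refine Finset.sum_congr rfl fun i _ => Finset.sum_congr rfl fun j _ => ?_
    ring
  -- Expand the square on the right-hand side.
  have sum_sq : (∑ i, ∑ j,
        ((∑ m, P i j m * W m) + ∑ m, ∑ p, R i j m p * U m p) ^ 2)
      = (∑ i, ∑ j, (∑ m, P i j m * W m) ^ 2)
        + 2 * (∑ i, ∑ j, (∑ m, P i j m * W m) * (∑ m, ∑ p, R i j m p * U m p))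
        + (∑ i, ∑ j, (∑ m, ∑ p, R i j m p * U m p) ^ 2) := by
    calc (∑ i, ∑ j, ((∑ m, P i j m * W m) + ∑ m, ∑ p, R i j m p * U m p) ^ 2)
        = ∑ i, ∑ j, ((∑ m, P i j m * W m) ^ 2
            + 2 * ((∑ m, P i j m * W m) * (∑ m, ∑ p, R i j m p * U m p))
            + (∑ m, ∑ p, R i j m p * U m p) ^ 2) :=
          Finset.sum_congr rfl fun i _ => Finset.sum_congr rfl fun j _ => by ring
      _ = _ := by simp only [Finset.sum_add_distrib, ← Finset.mul_sum]
  have main : ((∑ i, ∑ j, ∑ k, ∑ l, ∑ m, ∑ p, R i j m p * R k l m p * U i j * U k l)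
        + 4 * (∑ i, ∑ j, ∑ k, ∑ m, ∑ p, R i m j p * P m p k * U i j * W k)
        + (∑ i, ∑ j, ∑ m, ∑ p, P m p i * P m p j * W i * W j)
      = ∑ i, ∑ j,
          ((∑ m, P i j m * W m) + ∑ m, ∑ p, R i j m p * U m p) ^ 2) := by
    rw [E1, E2, E3, sum_sq]; ring
  refine ⟨main, ?_⟩
  rw [main]
  refine Finset.sum_nonneg fun i _ => Finset.sum_nonneg fun j _ => sq_nonneg _
end

section
/- Let m, n ∈ ℕ, let X : Fin m → Fin n → Fin n → ℝ be a family of antisymmetric matrices (X M i j = -X M j i for every M), and let Y : Fin m → Fin n → ℝ. Define the Gram tensors R i j k l := ∑_M X M i j · X M k l, P i j k := ∑_M X M i j · Y M k, and M' i j := ∑_M Y M i · Y M j. Then for every antisymmetric U : Fin n → Fin n → ℝ and every W : Fin n → ℝ: 2·∑ R i k j l · M' k l · W i · W j − 2·∑ P i k l · P j l k · W i · W j + 8·∑ R i l k m · P l j m · U i j · W k + 4·∑ R i m k n · R j m l n · U i j · U k l = ∑_{M,N} ( ∑_{i,k} X M i k · Y N k · W i − ∑_{j,k} X N j k · Y M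 k · W j − 2·∑_{i,j,k} X M i k · X N j k · U i j )². In particular, the left-hand side is nonnegative. -/
private lemma fact4 {α β γ δ : Type*} [Fintype α] [Fintype β] [Fintype γ] [Fintype δ]
    (f : α → γ → ℝ) (g : β → δ → ℝ) :
    ∑ i, ∑ j, ∑ k, ∑ l, f i k * g j l = (∑ i, ∑ k, f i k) * (∑ j, ∑ l, g j l) := by
  calc ∑ i, ∑ j, ∑ k, ∑ l, f i k * g j l
      = ∑ i, ∑ j, (∑ k, f i k) * (∑ l, g j l) := by
        refine Finset.sum_congr rfl fun i _ => Finset.sum_congr rfl fun j _ => ?_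
        rw [Finset.sum_mul_sum]
    _ = (∑ i, ∑ k, f i k) * (∑ j, ∑ l, g j l) := (Finset.sum_mul_sum _ _ _ _).symm

private lemma fact5 {α β γ δ ε : Type*} [Fintype α] [Fintype β] [Fintype γ]
    [Fintype δ] [Fintype ε]
    (f : γ → ε → ℝ) (g : α → β → δ → ℝ) :
    ∑ i, ∑ j, ∑ k, ∑ l, ∑ p, f k p * g i j l
      = (∑ k, ∑ p, f k p) * (∑ i, ∑ j, ∑ l, g i j l) := by
  calc ∑ i, ∑ j, ∑ k, ∑ l, ∑ p, f k p * g i j l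
      = ∑ i, ∑ j, ∑ k, (∑ p, f k p) * (∑ l, g i j l) := by
        refine Finset.sum_congr rfl fun i _ => Finset.sum_congr rfl fun j _ =>
          Finset.sum_congr rfl fun k _ => ?_
        rw [Finset.sum_mul_sum]
        exact Finset.sum_comm
    _ = ∑ i, ∑ j, (∑ k, ∑ p, f k p) * (∑ l, g i j l) := by
        refine Finset.sum_congr rfl fun i _ => Finset.sum_congr rfl fun j _ => ?_
        exact (Finset.sum_mul _ _ _).symm
    _ = ∑ i, (∑ k, ∑ p, f k p) * (∑ j, ∑ l, g i j l) := by
        refine Finset.sum_congr rfl fun i _ => ?_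
        exact (Finset.mul_sum _ _ _).symm
    _ = (∑ k, ∑ p, f k p) * (∑ i, ∑ j, ∑ l, g i j l) := (Finset.mul_sum _ _ _).symm

private lemma fact6 {α β γ δ ε ζ : Type*} [Fintype α] [Fintype β] [Fintype γ]
    [Fintype δ] [Fintype ε] [Fintype ζ]
    (f : α → β → ε → ℝ) (g : γ → δ → ζ → ℝ) :
    ∑ i, ∑ j, ∑ k, ∑ l, ∑ p, ∑ q, f i j p * g k l q
      = (∑ i, ∑ j, ∑ p, f i j p) * (∑ k, ∑ l, ∑ q, g k l q) := by
  calc ∑ i, ∑ j, ∑ k, ∑ l, ∑ p, ∑ q, f i j p * g k l q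
      = ∑ i, ∑ j, ∑ k, ∑ l, (∑ p, f i j p) * (∑ q, g k l q) := by
        refine Finset.sum_congr rfl fun i _ => Finset.sum_congr rfl fun j _ =>
          Finset.sum_congr rfl fun k _ => Finset.sum_congr rfl fun l _ => ?_
        rw [Finset.sum_mul_sum]
    _ = ∑ i, ∑ j, (∑ p, f i j p) * (∑ k, ∑ l, ∑ q, g k l q) := by
        refine Finset.sum_congr rfl fun i _ => Finset.sum_congr rfl fun j _ => ?_
        exact (calc (∑ p, f i j p) * (∑ k, ∑ l, ∑ q, g k l q)
              = ∑ k, (∑ p, f i j p) * (∑ l, ∑ q, g k l q) := Finset.mul_sum _ _ _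
            _ = ∑ k, ∑ l, (∑ p, f i j p) * (∑ q, g k l q) :=
              Finset.sum_congr rfl fun k _ => Finset.mul_sum _ _ _).symm
    _ = (∑ i, ∑ j, ∑ p, f i j p) * (∑ k, ∑ l, ∑ q, g k l q) := by
        exact (calc (∑ i, ∑ j, ∑ p, f i j p) * (∑ k, ∑ l, ∑ q, g k l q)
              = ∑ i, (∑ j, ∑ p, f i j p) * (∑ k, ∑ l, ∑ q, g k l q) := Finset.sum_mul _ _ _
            _ = ∑ i, ∑ j, (∑ p, f i j p) * (∑ k, ∑ l, ∑ q, g k l q) :=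
              Finset.sum_congr rfl fun i _ => Finset.sum_mul _ _ _).symm

/-- For Gram tensors `R_{ijkl} = ∑_M X^M_{ij} X^M_{kl}`, `P_{ijk} = ∑_M X^M_{ij} Y^M_k`,
`M'_{ij} = ∑_M Y^M_i Y^M_j` built from antisymmetric matrices `X^M` and vectors `Y^M`,
the Harnack combination is a sum of squares of linear forms, hence nonnegative. -/
theorem gram_harnack_sum_of_squares {m n : ℕ}
    (X : Fin m → Fin n → Fin n → ℝ) (Y : Fin m → Fin n → ℝ)
    (hX : ∀ M i j, X M i j = -X M j i)
    (R : Fin n → Fin n → Fin n → Fin n → ℝ)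
    (hR : ∀ i j k l, R i j k l = ∑ M, X M i j * X M k l)
    (P : Fin n → Fin n → Fin n → ℝ)
    (hP : ∀ i j k, P i j k = ∑ M, X M i j * Y M k)
    (M' : Fin n → Fin n → ℝ)
    (hM' : ∀ i j, M' i j = ∑ M, Y M i * Y M j)
    (U : Fin n → Fin n → ℝ) (hU : ∀ i j, U i j = -U j i)
    (W : Fin n → ℝ) :
    (2 * (∑ i, ∑ j, ∑ k, ∑ l, R i k j l * M' k l * W i * W j)
        - 2 * (∑ i, ∑ j, ∑ k, ∑ l, P i k l * P j l k * W i * W j)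
        + 8 * (∑ i, ∑ j, ∑ k, ∑ l, ∑ p, R i l k p * P l j p * U i j * W k)
        + 4 * (∑ i, ∑ j, ∑ k, ∑ l, ∑ p, ∑ q, R i p k q * R j p l q * U i j * U k l)
      = ∑ M, ∑ N,
          ((∑ i, ∑ k, X M i k * Y N k * W i)
            - (∑ j, ∑ k, X N j k * Y M k * W j)
            - 2 * (∑ i, ∑ j, ∑ k, X M i k * X N j k * U i j)) ^ 2)
    ∧ 0 ≤ 2 * (∑ i, ∑ j, ∑ k, ∑ l, R i k j l * M' k l * W i * W j)
        - 2 * (∑ i, ∑ j, ∑ k, ∑ l, P i k l * P j l k * W i * W j)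
        + 8 * (∑ i, ∑ j, ∑ k, ∑ l, ∑ p, R i l k p * P l j p * U i j * W k)
        + 4 * (∑ i, ∑ j, ∑ k, ∑ l, ∑ p, ∑ q, R i p k q * R j p l q * U i j * U k l) := by
  have key : ∀ {α : Type} [Fintype α] (f : α → Fin m → Fin m → ℝ),
      (∑ a, ∑ M, ∑ N, f a M N) = ∑ M, ∑ N, ∑ a, f a M N := by
    intro α _ f
    rw [Finset.sum_comm]
    exact Finset.sum_congr rfl fun _ _ => Finset.sum_comm
  set A : Fin m → Fin m → ℝ := fun M N => ∑ i, ∑ k, X M i k * Y N k * W i with hA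
  set B : Fin m → Fin m → ℝ :=
    fun M N => ∑ i, ∑ j, ∑ k, X M i k * X N j k * U i j with hB
  set C : Fin m → Fin m → ℝ :=
    fun M N => ∑ i, ∑ j, ∑ k, -(X M i k * X N j k * U i j) with hC
  have hCB : ∀ M N, C M N = -B M N := by
    intro M N
    simp [hC, hB, Finset.sum_neg_distrib]
  have hswap : ∀ f : Fin m → Fin m → ℝ, (∑ M, ∑ N, f N M) = ∑ M, ∑ N, f M N :=
    fun f => Finset.sum_comm
  have hBanti : ∀ M N, B N M = -B M N := by
    intro M N
    simp only [hB]
    calc ∑ i, ∑ j, ∑ k, X N i k * X M j k * U i j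
        = ∑ j, ∑ i, ∑ k, X N i k * X M j k * U i j := Finset.sum_comm
      _ = ∑ i, ∑ j, ∑ k, -(X M i k * X N j k * U i j) := by
          refine Finset.sum_congr rfl fun a _ => Finset.sum_congr rfl fun b _ =>
            Finset.sum_congr rfl fun c _ => ?_
          rw [hU b a]; ring
      _ = -∑ i, ∑ j, ∑ k, X M i k * X N j k * U i j := by
          simp [Finset.sum_neg_distrib]
  have h1 : (∑ i, ∑ j, ∑ k, ∑ l, R i k j l * M' k l * W i * W j)
      = ∑ M, ∑ N, A M N * A M N := by
    refine Eq.trans ?_ (hswap fun M N => A M N * A M N)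
    simp only [hR, hM', Finset.sum_mul, Finset.mul_sum]
    simp only [key]
    refine Finset.sum_congr rfl fun M _ => Finset.sum_congr rfl fun N _ => ?_
    refine Eq.trans ?_ (fact4 (fun i k => X N i k * Y M k * W i)
      (fun j l => X N j l * Y M l * W j))
    refine Finset.sum_congr rfl fun i _ => Finset.sum_congr rfl fun j _ =>
      Finset.sum_congr rfl fun k _ => Finset.sum_congr rfl fun l _ => ?_
    ring
  have h2 : (∑ i, ∑ j, ∑ k, ∑ l, P i k l * P j l k * W i * W j)
      = ∑ M, ∑ N, A M N * A N M := by
    refine Eq.trans ?_ (hswap fun M N => A M N * A N M)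
    simp only [hP, Finset.sum_mul, Finset.mul_sum]
    simp only [key]
    refine Finset.sum_congr rfl fun M _ => Finset.sum_congr rfl fun N _ => ?_
    refine Eq.trans ?_ (fact4 (fun i k => X N i k * Y M k * W i)
      (fun j l => X M j l * Y N l * W j))
    refine Finset.sum_congr rfl fun i _ => Finset.sum_congr rfl fun j _ =>
      Finset.sum_congr rfl fun k _ => Finset.sum_congr rfl fun l _ => ?_
    ring
  have h3 : (∑ i, ∑ j, ∑ k, ∑ l, ∑ p, R i l k p * P l j p * U i j * W k)
      = ∑ M, ∑ N, A M N * C M N := by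
    refine Eq.trans ?_ (hswap fun M N => A M N * C M N)
    simp only [hR, hP, Finset.sum_mul, Finset.mul_sum]
    simp only [key]
    refine Finset.sum_congr rfl fun M _ => Finset.sum_congr rfl fun N _ => ?_
    refine Eq.trans ?_ (fact5 (fun k p => X N k p * Y M p * W k)
      (fun i j l => -(X N i l * X M j l * U i j)))
    refine Finset.sum_congr rfl fun i _ => Finset.sum_congr rfl fun j _ =>
      Finset.sum_congr rfl fun k _ => Finset.sum_congr rfl fun l _ =>
      Finset.sum_congr rfl fun p _ => ?_
    rw [hX M l j]
    ring
  have h4 : (∑ i, ∑ j, ∑ k, ∑ l, ∑ p, ∑ q, R i p k q * R j p l q * U i j * U k l)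
      = ∑ M, ∑ N, B M N * B M N := by
    refine Eq.trans ?_ (hswap fun M N => B M N * B M N)
    simp only [hR, Finset.sum_mul, Finset.mul_sum]
    simp only [key]
    refine Finset.sum_congr rfl fun M _ => Finset.sum_congr rfl fun N _ => ?_
    refine Eq.trans ?_ (fact6 (fun i j p => X N i p * X M j p * U i j)
      (fun k l q => X N k q * X M l q * U k l))
    refine Finset.sum_congr rfl fun i _ => Finset.sum_congr rfl fun j _ =>
      Finset.sum_congr rfl fun k _ => Finset.sum_congr rfl fun l _ =>
      Finset.sum_congr rfl fun p _ => Finset.sum_congr rfl fun q _ => ?_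
    ring
  have hsq : (∑ M, ∑ N,
          ((∑ i, ∑ k, X M i k * Y N k * W i)
            - (∑ j, ∑ k, X N j k * Y M k * W j)
            - 2 * (∑ i, ∑ j, ∑ k, X M i k * X N j k * U i j)) ^ 2)
      = ∑ M, ∑ N, (A M N - A N M - 2 * B M N) ^ 2 := by
    simp only [hA, hB]
  have hswapAA : ∑ M, ∑ N, A N M * A N M = ∑ M, ∑ N, A M N * A M N :=
    Finset.sum_comm
  have hswapAB : ∑ M, ∑ N, A N M * B M N = -∑ M, ∑ N, A M N * B M N := by
    calc ∑ M, ∑ N, A N M * B M N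
        = ∑ M, ∑ N, -(A N M * B N M) := by
          refine Finset.sum_congr rfl fun M _ => Finset.sum_congr rfl fun N _ => ?_
          rw [hBanti N M]; ring
      _ = -∑ M, ∑ N, A N M * B N M := by simp [Finset.sum_neg_distrib]
      _ = -∑ M, ∑ N, A M N * B M N := congrArg Neg.neg Finset.sum_comm
  have main : (2 * (∑ i, ∑ j, ∑ k, ∑ l, R i k j l * M' k l * W i * W j)
        - 2 * (∑ i, ∑ j, ∑ k, ∑ l, P i k l * P j l k * W i * W j)
        + 8 * (∑ i, ∑ j, ∑ k, ∑ l, ∑ p, R i l k p * P l j p * U i j * W k)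
        + 4 * (∑ i, ∑ j, ∑ k, ∑ l, ∑ p, ∑ q, R i p k q * R j p l q * U i j * U k l)
      = ∑ M, ∑ N,
          ((∑ i, ∑ k, X M i k * Y N k * W i)
            - (∑ j, ∑ k, X N j k * Y M k * W j)
            - 2 * (∑ i, ∑ j, ∑ k, X M i k * X N j k * U i j)) ^ 2) := by
    rw [h1, h2, h3, h4, hsq]
    simp only [hCB]
    have pt : ∀ M N : Fin m, (A M N - A N M - 2 * B M N) ^ 2
        = A M N * A M N + A N M * A N M + 4 * (B M N * B M N)
          - 2 * (A M N * A N M) - 4 * (A M N * B M N) + 4 * (A N M * B M N) :=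
      fun M N => by ring
    simp only [pt, mul_neg, Finset.sum_neg_distrib, Finset.sum_add_distrib,
      Finset.sum_sub_distrib, ← Finset.mul_sum]
    rw [hswapAA, hswapAB]
    ring
  refine ⟨main, ?_⟩
  rw [main]
  exact Finset.sum_nonneg fun M _ => Finset.sum_nonneg fun N _ => sq_nonneg _
end

section
/- Let R : Fin n → Fin n → Fin n → Fin n → ℝ satisfy R i j k l = -R j i k l = -R i j l k = R k l i j, let P : Fin n → Fin n → Fin n → ℝ satisfy P i j k = -P j i k, and let M : Fin n → Fin n → ℝ be symmetric. Suppose the Harnack quadratic form is weakly positive, i.e., for every antisymmetric U : Fin n → Fin n → ℝ and every W : Fin n → ℝ one has ∑ R i j k l · U i j · U k l + 2·∑ P i j k · U i j · W k + ∑ M i j · W i · W j ≥ 0. Then for every antisymmetric U and every W: 2·∑ R i k j l · M k l · W i · W j − 2·∑ P i k l · P j l k · W i · W j + 8·∑ R i l k m · P l j m · U i j · W k + 4·∑ R i m k n · R j m l n · U i j · U k l ≥ 0. -/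
/-!
The hypothesis says that `harnackMatrix R P M`, the matrix of the Harnack form on pairs of
indices and vectors, is positive semidefinite. Hence it is a Gram matrix: after
antisymmetrizing there are antisymmetric `X r` and vectors `V r` with
`R i j k l = ∑ r, X r i j * X r k l`, `P i j k = ∑ r, X r i j * V r k` and
`M i j = ∑ r, V r i * V r j`. Substituting, the four terms of the conclusion become
`∑ b r s ^ 2`, `∑ b r s * b s r`, `∑ a r s * b r s` and `∑ a r s ^ 2`, where
`a r s = ∑ U i j * (X r * X s) i j` is antisymmetric in `r, s` and `b r s = W ⬝ᵥ X r *ᵥ V s`.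
The whole expression is then `∑ r, ∑ s, (2 * a r s + b r s - b s r) ^ 2`.
-/

open Finset Matrix

section Antisymmetrization

variable {κ : Type*} [Fintype κ]

noncomputable def antisymmPart (u : κ → κ → ℝ) (i j : κ) : ℝ := (u i j - u j i) / 2

lemma sum_mul_antisymmPart {g : κ → κ → ℝ} (hg : ∀ i j, g i j = -g j i) (u : κ → κ → ℝ) :
    ∑ i, ∑ j, g i j * antisymmPart u i j = ∑ i, ∑ j, g i j * u i j := by
  have swap : ∑ i, ∑ j, g i j * u j i = -∑ i, ∑ j, g i j * u i j := by
    rw [sum_comm, ← sum_neg_distrib]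
    refine sum_congr rfl fun i _ => ?_
    rw [← sum_neg_distrib]
    exact sum_congr rfl fun j _ => by rw [hg j i]; ring
  simp only [antisymmPart, mul_div_assoc', mul_sub, ← sum_div, sum_sub_distrib, swap]
  ring

end Antisymmetrization

section HarnackMatrix

variable {κ : Type*} (R : κ → κ → κ → κ → ℝ) (P : κ → κ → κ → ℝ) (M : κ → κ → ℝ)

def harnackForm [Fintype κ] (U : κ → κ → ℝ) (W : κ → ℝ) : ℝ :=
  (∑ i, ∑ j, ∑ k, ∑ l, R i j k l * U i j * U k l)
    + 2 * (∑ i, ∑ j, ∑ k, P i j k * U i j * W k)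
    + ∑ i, ∑ j, M i j * W i * W j

variable {R P} in
lemma harnackForm_antisymmPart [Fintype κ] (hR1 : ∀ i j k l, R i j k l = -R j i k l)
    (hR2 : ∀ i j k l, R i j k l = -R i j l k) (hP : ∀ i j k, P i j k = -P j i k)
    (U : κ → κ → ℝ) (W : κ → ℝ) :
    harnackForm R P M (antisymmPart U) W = harnackForm R P M U W := by
  have hRU : ∑ i, ∑ j, ∑ k, ∑ l, R i j k l * antisymmPart U i j * antisymmPart U k l
      = ∑ i, ∑ j, ∑ k, ∑ l, R i j k l * U i j * U k l := by
    have inner : ∀ i j, ∑ k, ∑ l, R i j k l * antisymmPart U k l = ∑ k, ∑ l, R i j k l * U k l :=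
      fun i j => sum_mul_antisymmPart (hR2 i j) U
    have outer : ∑ i, ∑ j, (∑ k, ∑ l, R i j k l * U k l) * antisymmPart U i j
        = ∑ i, ∑ j, (∑ k, ∑ l, R i j k l * U k l) * U i j :=
      sum_mul_antisymmPart (fun i j => by simp only [hR1 i j, neg_mul, sum_neg_distrib]) U
    calc _ = ∑ i, ∑ j, (∑ k, ∑ l, R i j k l * antisymmPart U k l) * antisymmPart U i j := by
          simp only [sum_mul]; ac_rfl
      _ = ∑ i, ∑ j, (∑ k, ∑ l, R i j k l * U k l) * U i j := by simp only [inner, outer]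
      _ = _ := by simp only [sum_mul]; ac_rfl
  have hPU : ∑ i, ∑ j, ∑ k, P i j k * antisymmPart U i j * W k
      = ∑ i, ∑ j, ∑ k, P i j k * U i j * W k := by
    calc _ = ∑ i, ∑ j, (∑ k, P i j k * W k) * antisymmPart U i j := by
          simp only [sum_mul]; ac_rfl
      _ = ∑ i, ∑ j, (∑ k, P i j k * W k) * U i j :=
          sum_mul_antisymmPart (fun i j => by simp only [hP i j, neg_mul, sum_neg_distrib]) U
      _ = _ := by simp only [sum_mul]; ac_rfl
  rw [harnackForm, harnackForm, hRU, hPU]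

/-- The index `.inl (i, j)` carries the two-form part and `.inr k` the vector part. Vectors are
not required to be antisymmetric in the `.inl` block, so positivity needs `antisymmPart`. -/
def harnackMatrix : Matrix ((κ × κ) ⊕ κ) ((κ × κ) ⊕ κ) ℝ :=
  fromBlocks (of fun p q => R p.1 p.2 q.1 q.2) (of fun p k => P p.1 p.2 k)
    (of fun p k => P p.1 p.2 k)ᵀ (of M)

variable {R M} in
lemma harnackMatrix_isHermitian (hR3 : ∀ i j k l, R i j k l = R k l i j)
    (hM : ∀ i j, M i j = M j i) : (harnackMatrix R P M).IsHermitian :=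
  IsHermitian.fromBlocks (by ext p q; exact hR3 q.1 q.2 p.1 p.2) rfl
    (by ext i j; exact hM j i)

lemma dotProduct_harnackMatrix_mulVec [Fintype κ] (x : (κ × κ) ⊕ κ → ℝ) :
    star x ⬝ᵥ harnackMatrix R P M *ᵥ x
      = harnackForm R P M (fun i j => x (.inl (i, j))) (fun k => x (.inr k)) := by
  rw [harnackMatrix, fromBlocks_mulVec, dotProduct_block]
  simp only [star_trivial, Sum.elim_comp_inl, Sum.elim_comp_inr, dotProduct_add]
  rw [dotProduct_mulVec _ (of _)ᵀ, vecMul_transpose, dotProduct_comm (_ *ᵥ _) (x ∘ Sum.inl)]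
  rw [harnackForm, two_mul]
  simp only [dotProduct, mulVec, Fintype.sum_prod_type, Function.comp_apply, of_apply, mul_sum]
  simp only [mul_left_comm _ (R _ _ _ _), mul_left_comm _ (P _ _ _), mul_left_comm _ (M _ _),
    mul_assoc]
  ring

variable {R P M} in
lemma harnackMatrix_posSemidef [Fintype κ] (hR1 : ∀ i j k l, R i j k l = -R j i k l)
    (hR2 : ∀ i j k l, R i j k l = -R i j l k) (hR3 : ∀ i j k l, R i j k l = R k l i j)
    (hP : ∀ i j k, P i j k = -P j i k) (hM : ∀ i j, M i j = M j i)
    (hpos : ∀ U : κ → κ → ℝ, (∀ i j, U i j = -U j i) → ∀ W, 0 ≤ harnackForm R P M U W) :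
    (harnackMatrix R P M).PosSemidef := by
  refine posSemidef_iff_dotProduct_mulVec.mpr ⟨harnackMatrix_isHermitian P hR3 hM, fun x => ?_⟩
  rw [dotProduct_harnackMatrix_mulVec, ← harnackForm_antisymmPart M hR1 hR2 hP]
  exact hpos _ (fun i j => by simp only [antisymmPart]; ring) _

end HarnackMatrix

section Gram

variable {ι κ : Type*} [Fintype ι]

def gramR (X : ι → κ → κ → ℝ) (i j k l : κ) : ℝ := ∑ r, X r i j * X r k l

def gramP (X : ι → κ → κ → ℝ) (V : ι → κ → ℝ) (i j k : κ) : ℝ := ∑ r, X r i j * V r k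

def gramM (V : ι → κ → ℝ) (i j : κ) : ℝ := ∑ r, V r i * V r j

end Gram

lemma exists_gram_of_harnackMatrix_posSemidef {κ : Type*} [Fintype κ]
    {R : κ → κ → κ → κ → ℝ} {P : κ → κ → κ → ℝ} {M : κ → κ → ℝ}
    (hR1 : ∀ i j k l, R i j k l = -R j i k l) (hR2 : ∀ i j k l, R i j k l = -R i j l k)
    (hP : ∀ i j k, P i j k = -P j i k) (hQ : (harnackMatrix R P M).PosSemidef) :
    ∃ (X : (κ × κ) ⊕ κ → κ → κ → ℝ) (V : (κ × κ) ⊕ κ → κ → ℝ),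
      (∀ r i j, X r i j = -X r j i) ∧ R = gramR X ∧ P = gramP X V ∧ M = gramM V := by
  classical
  obtain ⟨B, hB⟩ : ∃ B, harnackMatrix R P M = star B * B := by
    open scoped MatrixOrder in
    exact CStarAlgebra.nonneg_iff_eq_star_mul_self.mp hQ.nonneg
  have entry α β : harnackMatrix R P M α β = ∑ r, B r α * B r β := by
    rw [hB, mul_apply]; rfl
  refine ⟨fun r i j => (B r (.inl (i, j)) - B r (.inl (j, i))) / 2, fun r k => B r (.inr k),
    fun r i j => by ring, ?_, ?_, ?_⟩
  · ext i j k l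
    have e₁ := entry (.inl (i, j)) (.inl (k, l))
    have e₂ := entry (.inl (j, i)) (.inl (k, l))
    have e₃ := entry (.inl (i, j)) (.inl (l, k))
    have e₄ := entry (.inl (j, i)) (.inl (l, k))
    simp only [harnackMatrix, fromBlocks_apply₁₁, of_apply] at e₁ e₂ e₃ e₄
    simp only [gramR, div_mul_div_comm, sub_mul, mul_sub, ← sum_div, sum_sub_distrib,
      ← e₁, ← e₂, ← e₃, ← e₄]
    linarith [hR1 i j k l, hR2 i j k l, hR1 i j l k]
  · ext i j k
    have e₁ := entry (.inl (i, j)) (.inr k)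
    have e₂ := entry (.inl (j, i)) (.inr k)
    simp only [harnackMatrix, fromBlocks_apply₁₂, of_apply] at e₁ e₂
    simp only [gramP, div_mul_eq_mul_div, sub_mul, ← sum_div, sum_sub_distrib, ← e₁, ← e₂]
    linarith [hP i j k]
  · ext i j
    exact entry (.inr i) (.inr j)

section Pairing

variable {ι κ : Type*} [Fintype κ] (X : ι → κ → κ → ℝ) (V : ι → κ → ℝ) (U : κ → κ → ℝ)
  (W : κ → ℝ)

def uPairing (r s : ι) : ℝ := ∑ i, ∑ j, ∑ p, U i j * X r i p * X s p j

def wPairing (r s : ι) : ℝ := ∑ i, ∑ k, W i * X r i k * V s k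

variable {X U} in
lemma uPairing_swap (hX : ∀ r i j, X r i j = -X r j i) (hU : ∀ i j, U i j = -U j i) (r s : ι) :
    uPairing X U s r = -uPairing X U r s := by
  simp only [uPairing, ← sum_neg_distrib]
  rw [sum_comm]
  refine sum_congr rfl fun i _ => sum_congr rfl fun j _ => sum_congr rfl fun p _ => ?_
  rw [hU j i, hX s j p, hX r p i]
  ring

end Pairing

lemma sum_sq_antisymm_add_sub_transpose {ι : Type*} [Fintype ι] (A B : ι → ι → ℝ)
    (hA : ∀ r s, A s r = -A r s) :
    ∑ r, ∑ s, (2 * A r s + B r s - B s r) ^ 2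
      = 2 * ∑ r, ∑ s, B r s ^ 2 - 2 * ∑ r, ∑ s, B r s * B s r
        + 8 * ∑ r, ∑ s, A r s * B r s + 4 * ∑ r, ∑ s, A r s ^ 2 := by
  have hBB : ∑ r, ∑ s, B s r ^ 2 = ∑ r, ∑ s, B r s ^ 2 := sum_comm
  have hAB : ∑ r, ∑ s, A r s * B s r = -∑ r, ∑ s, A r s * B r s := by
    rw [sum_comm]
    simp only [← sum_neg_distrib]
    exact sum_congr rfl fun r _ => sum_congr rfl fun s _ => by rw [hA]; ring
  calc _ = ∑ r, ∑ s, (4 * A r s ^ 2 + B r s ^ 2 + B s r ^ 2 + 4 * (A r s * B r s)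
          - 4 * (A r s * B s r) - 2 * (B r s * B s r)) :=
        sum_congr rfl fun r _ => sum_congr rfl fun s _ => by ring
    _ = _ := by
      simp only [sum_add_distrib, sum_sub_distrib, ← mul_sum, hBB, hAB]
      ring

section GramExpansion

variable {ι κ : Type*} [Fintype ι] [Fintype κ] (X : ι → κ → κ → ℝ) (V : ι → κ → ℝ)
  (U : κ → κ → ℝ) (W : κ → ℝ)

lemma sum_gramR_mul_gramM :
    ∑ i, ∑ j, ∑ k, ∑ l, gramR X i k j l * gramM V k l * W i * W j
      = ∑ r, ∑ s, wPairing X V W r s ^ 2 := by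
  simp only [gramR, gramM, wPairing, sq, sum_mul_sum]
  simp only [sum_mul]
  simp only [sum_comm (s := (univ : Finset κ)) (t := (univ : Finset ι))]
  ac_rfl

lemma sum_gramP_mul_gramP :
    ∑ i, ∑ j, ∑ k, ∑ l, gramP X V i k l * gramP X V j l k * W i * W j
      = ∑ r, ∑ s, wPairing X V W r s * wPairing X V W s r := by
  simp only [gramP, wPairing, sum_mul_sum]
  simp only [sum_mul]
  simp only [sum_comm (s := (univ : Finset κ)) (t := (univ : Finset ι))]
  ac_rfl

lemma sum_gramR_mul_gramP :
    ∑ i, ∑ j, ∑ k, ∑ l, ∑ p, gramR X i l k p * gramP X V l j p * U i j * W k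
      = ∑ r, ∑ s, uPairing X U r s * wPairing X V W r s := by
  simp only [gramR, gramP, uPairing, wPairing, sum_mul_sum]
  simp only [sum_mul]
  simp only [sum_comm (s := (univ : Finset κ)) (t := (univ : Finset ι))]
  refine sum_congr rfl fun r _ => sum_congr rfl fun s _ => sum_congr rfl fun i _ => ?_
  rw [sum_comm]
  refine sum_congr rfl fun k _ => sum_congr rfl fun j _ => ?_
  rw [sum_comm]
  ac_rfl

variable {X} in
lemma sum_gramR_mul_gramR (hX : ∀ r i j, X r i j = -X r j i) :
    ∑ i, ∑ j, ∑ k, ∑ l, ∑ p, ∑ q, gramR X i p k q * gramR X j p l q * U i j * U k l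
      = ∑ r, ∑ s, uPairing X U r s ^ 2 := by
  simp only [gramR, uPairing, sq, sum_mul_sum]
  simp only [sum_mul]
  simp only [sum_comm (s := (univ : Finset κ)) (t := (univ : Finset ι))]
  refine sum_congr rfl fun r _ => sum_congr rfl fun s _ => sum_congr rfl fun i _ => ?_
  rw [sum_comm]
  refine sum_congr rfl fun k _ => sum_congr rfl fun j _ => sum_congr rfl fun l _ =>
    sum_congr rfl fun p _ => sum_congr rfl fun q _ => ?_
  rw [hX s p j, hX s q l]
  ring

end GramExpansion

/-- If the Harnack quadratic form built from `R`, `P`, `M` is weakly positive, then the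
quadratic curvature combination appearing in the evolution of the Harnack expression
is weakly positive as well. -/
theorem harnack_positivity {n : ℕ}
    (R : Fin n → Fin n → Fin n → Fin n → ℝ)
    (hR1 : ∀ i j k l, R i j k l = -R j i k l)
    (hR2 : ∀ i j k l, R i j k l = -R i j l k)
    (hR3 : ∀ i j k l, R i j k l = R k l i j)
    (P : Fin n → Fin n → Fin n → ℝ)
    (hP : ∀ i j k, P i j k = -P j i k)
    (M : Fin n → Fin n → ℝ) (hM : ∀ i j, M i j = M j i)
    (hpos : ∀ (U : Fin n → Fin n → ℝ), (∀ i j, U i j = -U j i) →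
      ∀ W : Fin n → ℝ,
        0 ≤ (∑ i, ∑ j, ∑ k, ∑ l, R i j k l * U i j * U k l)
          + 2 * (∑ i, ∑ j, ∑ k, P i j k * U i j * W k)
          + ∑ i, ∑ j, M i j * W i * W j) :
    ∀ (U : Fin n → Fin n → ℝ), (∀ i j, U i j = -U j i) →
      ∀ W : Fin n → ℝ,
        0 ≤ 2 * (∑ i, ∑ j, ∑ k, ∑ l, R i k j l * M k l * W i * W j)
          - 2 * (∑ i, ∑ j, ∑ k, ∑ l, P i k l * P j l k * W i * W j)
          + 8 * (∑ i, ∑ j, ∑ k, ∑ l, ∑ p, R i l k p * P l j p * U i j * W k)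
          + 4 * (∑ i, ∑ j, ∑ k, ∑ l, ∑ p, ∑ q, R i p k q * R j p l q * U i j * U k l) := by
  intro U hU W
  have hQ := harnackMatrix_posSemidef hR1 hR2 hR3 hP hM hpos
  obtain ⟨X, V, hX, rfl, rfl, rfl⟩ := exists_gram_of_harnackMatrix_posSemidef hR1 hR2 hP hQ
  rw [sum_gramR_mul_gramM, sum_gramP_mul_gramP, sum_gramR_mul_gramP, sum_gramR_mul_gramR U hX,
    ← sum_sq_antisymm_add_sub_transpose _ _ (uPairing_swap hX hU)]
  positivity
end
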